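/- arXiv:2212.13762 — 7 statements merged into one kernel-verified Lean document; each statement's English description precedes it below -/
import Mathlib

section
/- Iterated Duhamel representation (Theorem 3.1). Assume that for every integer k with 0 ≤ k ≤ K−1 the one-step Duhamel relations hold: ψ(t_{k+1}) = cos(hG) ψ(t_k) + G⁻¹ sin(hG) φ(t_k) + ∫₀ʰ G⁻¹ sin((h−τ)G) (m(t_k+τ) (ψ(t_k+τ))) dτ and φ(t_{k+1}) = −G sin(hG) ψ(t_k) + cos(hG) φ(t_k) + ∫₀ʰ cos((h−τ)G) (m(t_k+τ) (ψ(t_k+τ))) dτ. Then for every integer k with 1 ≤ k ≤ K one has ψ(t_k) = cos(khG) ψ(t₀) + G⁻¹ sin(khG) φ(t₀) + Σ_{l=0}^{k−1} ∫₀ʰ G⁻¹ sin(((k−l)h−τ)G) (m(t_l+τ) (ψ(t_l+τ))) dτ and φ(t_k) = −G sin(khG) ψ(t₀) + cos(khG) φ(t₀) + Σ_{l=0}^{k−1} ∫₀ʰ cos(((k−l)h−τ)G) (m(t_l+τ) (ψ(t_l+τ))) dτ. -/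
/-- `cos(tG) := (exp(itG) + exp(−itG))/2` in a complex unital Banach algebra. -/
noncomputable def opCos {A : Type*} [NormedRing A] [NormedAlgebra ℂ A] (t : ℝ) (G : A) : A :=
  (2 : ℂ)⁻¹ • (NormedSpace.exp (((t : ℂ) * Complex.I) • G) +
    NormedSpace.exp ((-(t : ℂ) * Complex.I) • G))

/-- `sin(tG) := (exp(itG) − exp(−itG))/(2i)` in a complex unital Banach algebra. -/
noncomputable def opSin {A : Type*} [NormedRing A] [NormedAlgebra ℂ A] (t : ℝ) (G : A) : A :=
  (2 * Complex.I)⁻¹ • (NormedSpace.exp (((t : ℂ) * Complex.I) • G) -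
    NormedSpace.exp ((-(t : ℂ) * Complex.I) • G))

/-!
Write the state as the pair `(ψ, φ) ∈ E × E` and let `S t` be the block operator
`[[cos tG, G⁻¹ sin tG], [−G sin tG, cos tG]]`. The one-step relations say
`x (k+1) = S h (x k) + ∫₀ʰ S (h − τ) (0, f k τ) dτ` with `f k τ = m (t_k + τ) (ψ (t_k + τ))`.
The addition formulas for `cos` and `sin`, together with `G⁻¹` commuting with `G`, make `S` a
one-parameter group, `S (s + t) = S s * S t`. Iterating the one-step relation and pulling `S h`
inside the integrals then gives the discrete variation-of-constants formula
`x k = S (k h) (x 0) + ∑ l < k, ∫₀ʰ S ((k − l) h − τ) (0, f l τ) dτ`, whose two components are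
the claimed identities.
-/

section OperatorTrigonometry

variable {A : Type*} [NormedRing A] [NormedAlgebra ℂ A]

theorem Commute.opCos_right {a G : A} (h : Commute a G) (t : ℝ) : Commute a (opCos t G) :=
  (((h.smul_right _).exp_right).add_right ((h.smul_right _).exp_right)).smul_right _

theorem Commute.opSin_right {a G : A} (h : Commute a G) (t : ℝ) : Commute a (opSin t G) :=
  (((h.smul_right _).exp_right).sub_right ((h.smul_right _).exp_right)).smul_right _

variable [CompleteSpace A]

theorem exp_add_smul (a b : ℂ) (G : A) :
    NormedSpace.exp ((a + b) • G) = NormedSpace.exp (a • G) * NormedSpace.exp (b • G) := by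
  let +nondep : NormedAlgebra ℚ A := .restrictScalars ℚ ℂ A
  rw [add_smul, NormedSpace.exp_add_of_commute (((Commute.refl G).smul_left a).smul_right b)]

theorem opCos_add (s t : ℝ) (G : A) :
    opCos (s + t) G = opCos s G * opCos t G - opSin s G * opSin t G := by
  simp only [opCos, opSin, Complex.ofReal_add, add_mul, neg_add, exp_add_smul,
    smul_mul_smul_comm, mul_add, add_mul, mul_sub, sub_mul]
  match_scalars <;> field_simp <;> norm_num [Complex.I_sq]

theorem opSin_add (s t : ℝ) (G : A) :
    opSin (s + t) G = opSin s G * opCos t G + opCos s G * opSin t G := by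
  simp only [opCos, opSin, Complex.ofReal_add, add_mul, neg_add, exp_add_smul,
    smul_mul_smul_comm, mul_add, add_mul, mul_sub, sub_mul]
  match_scalars <;> field_simp <;> norm_num [Complex.I_sq]

theorem continuous_opCos (G : A) : Continuous fun t : ℝ => opCos t G := by
  let +nondep : NormedAlgebra ℚ A := .restrictScalars ℚ ℂ A
  unfold opCos
  fun_prop

theorem continuous_opSin (G : A) : Continuous fun t : ℝ => opSin t G := by
  let +nondep : NormedAlgebra ℚ A := .restrictScalars ℚ ℂ A
  unfold opSin
  fun_prop

end OperatorTrigonometry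

theorem intervalIntegral_prodMk {E F : Type*} [NormedAddCommGroup E] [NormedSpace ℝ E]
    [CompleteSpace E] [NormedAddCommGroup F] [NormedSpace ℝ F] [CompleteSpace F]
    {μ : MeasureTheory.Measure ℝ} {a b : ℝ} {f : ℝ → E} {g : ℝ → F}
    (hf : IntervalIntegrable f μ a b) (hg : IntervalIntegrable g μ a b) :
    ∫ x in a..b, (f x, g x) ∂μ = (∫ x in a..b, f x ∂μ, ∫ x in a..b, g x ∂μ) := by
  simp only [intervalIntegral, integral_pair hf.1 hg.1, integral_pair hf.2 hg.2, Prod.mk_sub_mk]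

section DiscreteDuhamel

variable {𝕜 F : Type*} [RCLike 𝕜] [NormedAddCommGroup F] [NormedSpace ℝ F] [NormedSpace 𝕜 F]
  [CompleteSpace F] {U : ℝ → F →L[𝕜] F}

theorem apply_intervalIntegral_of_map_add (hU : Continuous U)
    (hU_add : ∀ s t, U (s + t) = U s * U t) {g : ℝ → F} (hg : Continuous g) (a b c s : ℝ) :
    U s (∫ τ in a..b, U (c - τ) (g τ)) = ∫ τ in a..b, U (s + c - τ) (g τ) := by
  have hcont : Continuous fun τ => U (c - τ) (g τ) := (hU.comp (by fun_prop)).clm_apply hg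
  rw [← (U s).intervalIntegral_comp_comm (hcont.intervalIntegrable a b)]
  simp only [add_sub_assoc, hU_add, mul_apply_eq_comp]

theorem discrete_duhamel (hU : Continuous U) (hU_add : ∀ s t, U (s + t) = U s * U t)
    {h : ℝ} {K : ℕ} {x : ℕ → F} {g : ℕ → ℝ → F} (hg : ∀ l, Continuous (g l))
    (hstep : ∀ k < K, x (k + 1) = U h (x k) + ∫ τ in (0:ℝ)..h, U (h - τ) (g k τ)) :
    ∀ k, 1 ≤ k → k ≤ K → x k = U (k * h) (x 0) +
      ∑ l ∈ Finset.range k, ∫ τ in (0:ℝ)..h, U ((k - l) * h - τ) (g l τ) := by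
  intro k hk
  induction k, hk using Nat.le_induction with
  | base => intro hK; simpa using hstep 0 hK
  | succ n hn ih =>
    intro hnK
    have hshift (l : ℕ) : U h (∫ τ in (0:ℝ)..h, U ((n - l) * h - τ) (g l τ)) =
        ∫ τ in (0:ℝ)..h, U (((n + 1 : ℕ) - l) * h - τ) (g l τ) := by
      have htime (τ : ℝ) : h + (n - l) * h - τ = ((n + 1 : ℕ) - l) * h - τ := by push_cast; ring
      simp only [apply_intervalIntegral_of_map_add hU hU_add (hg l), htime]
    have htime₀ : h + n * h = (n + 1 : ℕ) * h := by push_cast; ring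
    have htime₁ : ((n + 1 : ℕ) - n : ℝ) * h = h := by push_cast; ring
    rw [hstep n hnK, ih (by omega), map_add, map_sum, ← mul_apply_eq_comp, ← hU_add,
      Finset.sum_range_succ, add_assoc]
    simp only [hshift, htime₀, htime₁]

end DiscreteDuhamel

section Propagator

variable {E : Type*} [NormedAddCommGroup E] [NormedSpace ℂ E] (G Ginv : E →L[ℂ] E)

noncomputable def propagator (t : ℝ) : E × E →L[ℂ] E × E :=
  ((opCos t G).coprod (Ginv * opSin t G)).prod ((-(G * opSin t G)).coprod (opCos t G))

@[simp]
theorem propagator_apply (t : ℝ) (x : E × E) :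
    propagator G Ginv t x =
      (opCos t G x.1 + Ginv (opSin t G x.2), -G (opSin t G x.1) + opCos t G x.2) :=
  rfl

variable [CompleteSpace E]

theorem continuous_propagator : Continuous (propagator G Ginv) := by
  have hC := continuous_opCos G
  have hGinvS := continuous_const.mul (continuous_opSin G) (f := fun _ => Ginv)
  have hGS := continuous_const.mul (continuous_opSin G) (f := fun _ => G)
  exact (ContinuousLinearMap.prodL ℂ).continuous.comp
    (((ContinuousLinearMap.coprodEquivL ℂ).continuous.comp (hC.prodMk hGinvS)).prodMk
      ((ContinuousLinearMap.coprodEquivL ℂ).continuous.comp (hGS.neg.prodMk hC)))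

theorem propagator_add (hGr : G * Ginv = 1) (hGl : Ginv * G = 1) (s t : ℝ) :
    propagator G Ginv (s + t) = propagator G Ginv s * propagator G Ginv t := by
  have hGinv : Commute Ginv G := hGl.trans hGr.symm
  have hGinvSG : ∀ z, Ginv (opSin s G (G z)) = opSin s G z :=
    DFunLike.congr_fun (show Ginv * opSin s G * G = opSin s G by
      rw [(hGinv.opSin_right s).eq, mul_assoc, hGl, mul_one])
  have hGSGinv : ∀ z, G (opSin s G (Ginv z)) = opSin s G z :=
    DFunLike.congr_fun (show G * opSin s G * Ginv = opSin s G by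
      rw [((Commute.refl G).opSin_right s).eq, mul_assoc, hGr, mul_one])
  have hCGinv : ∀ z, opCos s G (Ginv z) = Ginv (opCos s G z) :=
    DFunLike.congr_fun (hGinv.opCos_right s).eq.symm
  have hCG : ∀ z, opCos s G (G z) = G (opCos s G z) :=
    DFunLike.congr_fun ((Commute.refl G).opCos_right s).eq.symm
  refine ContinuousLinearMap.ext fun ⟨x, y⟩ => Prod.ext ?_ ?_ <;>
    simp [opCos_add, opSin_add, hGinvSG, hGSGinv, hCGinv, hCG] <;> abel

theorem intervalIntegral_propagator_apply_zero_mk {f : ℝ → E} (hf : Continuous f) (a b c : ℝ) :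
    ∫ τ in a..b, propagator G Ginv (c - τ) (0, f τ) =
      (∫ τ in a..b, Ginv (opSin (c - τ) G (f τ)), ∫ τ in a..b, opCos (c - τ) G (f τ)) := by
  have hS : Continuous fun τ => Ginv (opSin (c - τ) G (f τ)) :=
    Ginv.continuous.comp (((continuous_opSin G).comp (by fun_prop)).clm_apply hf)
  have hC : Continuous fun τ => opCos (c - τ) G (f τ) :=
    ((continuous_opCos G).comp (by fun_prop)).clm_apply hf
  rw [← intervalIntegral_prodMk (hS.intervalIntegrable a b) (hC.intervalIntegrable a b)]
  simp

end Propagator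

theorem iterated_duhamel_representation_general
    {E : Type*} [NormedAddCommGroup E] [NormedSpace ℂ E] [CompleteSpace E]
    (G Ginv : E →L[ℂ] E) (hGr : G * Ginv = 1) (hGl : Ginv * G = 1)
    (t₀ h : ℝ) (K : ℕ)
    (m : ℝ → (E →L[ℂ] E)) (hm : Continuous m)
    (ψ φ : ℝ → E) (hψ : Continuous ψ)
    (hstepψ : ∀ k : ℕ, k ≤ K - 1 →
      ψ (t₀ + ((k : ℝ) + 1) * h) =
        opCos h G (ψ (t₀ + k * h)) + Ginv (opSin h G (φ (t₀ + k * h))) +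
          ∫ τ in (0:ℝ)..h,
            Ginv (opSin (h - τ) G (m (t₀ + k * h + τ) (ψ (t₀ + k * h + τ)))))
    (hstepφ : ∀ k : ℕ, k ≤ K - 1 →
      φ (t₀ + ((k : ℝ) + 1) * h) =
        -(G (opSin h G (ψ (t₀ + k * h)))) + opCos h G (φ (t₀ + k * h)) +
          ∫ τ in (0:ℝ)..h,
            opCos (h - τ) G (m (t₀ + k * h + τ) (ψ (t₀ + k * h + τ)))) :
    ∀ k : ℕ, 1 ≤ k → k ≤ K →
      (ψ (t₀ + k * h) =
        opCos (k * h) G (ψ t₀) + Ginv (opSin (k * h) G (φ t₀)) +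
          ∑ l ∈ Finset.range k,
            ∫ τ in (0:ℝ)..h,
              Ginv (opSin (((k : ℝ) - l) * h - τ) G
                (m (t₀ + l * h + τ) (ψ (t₀ + l * h + τ))))) ∧
      (φ (t₀ + k * h) =
        -(G (opSin (k * h) G (ψ t₀))) + opCos (k * h) G (φ t₀) +
          ∑ l ∈ Finset.range k,
            ∫ τ in (0:ℝ)..h,
              opCos (((k : ℝ) - l) * h - τ) G
                (m (t₀ + l * h + τ) (ψ (t₀ + l * h + τ)))) := by
  have hf (l : ℕ) : Continuous fun τ => m (t₀ + l * h + τ) (ψ (t₀ + l * h + τ)) :=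
    (hm.comp (by fun_prop)).clm_apply (hψ.comp (by fun_prop))
  have hforce (l : ℕ) := intervalIntegral_propagator_apply_zero_mk G Ginv (hf l) 0 h
  intro k hk hkK
  have hduhamel := discrete_duhamel (continuous_propagator G Ginv) (propagator_add G Ginv hGr hGl)
    (x := fun k => (ψ (t₀ + k * h), φ (t₀ + k * h)))
    (g := fun l τ => (0, m (t₀ + l * h + τ) (ψ (t₀ + l * h + τ))))
    (fun l => continuous_const.prodMk (hf l))
    (fun k hk => by
      rw [hforce k h]
      push_cast
      ext
      · simpa using hstepψ k (by omega)
      · simpa using hstepφ k (by omega)) k hk hkK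
  simp only [hforce] at hduhamel
  simpa [Prod.ext_iff, Prod.fst_sum, Prod.snd_sum] using hduhamel

/-- **Theorem 3.1, iterated Duhamel representation.**
If the one-step Duhamel relations hold for `0 ≤ k ≤ K−1`, then for every `1 ≤ k ≤ K`
the iterated representation holds, for both `ψ` and `φ`. -/
theorem iterated_duhamel_representation
    {E : Type*} [NormedAddCommGroup E] [NormedSpace ℂ E] [CompleteSpace E]
    (G Ginv : E →L[ℂ] E) (hGr : G * Ginv = 1) (hGl : Ginv * G = 1)
    (t₀ h : ℝ) (hh : 0 < h) (K : ℕ) (hK : 1 ≤ K)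
    (m : ℝ → (E →L[ℂ] E)) (hm : Continuous m)
    (ψ φ : ℝ → E) (hψ : Continuous ψ) (hφ : Continuous φ)
    (hstepψ : ∀ k : ℕ, k ≤ K - 1 →
      ψ (t₀ + ((k : ℝ) + 1) * h) =
        opCos h G (ψ (t₀ + k * h)) + Ginv (opSin h G (φ (t₀ + k * h))) +
          ∫ τ in (0:ℝ)..h,
            Ginv (opSin (h - τ) G (m (t₀ + k * h + τ) (ψ (t₀ + k * h + τ)))))
    (hstepφ : ∀ k : ℕ, k ≤ K - 1 →
      φ (t₀ + ((k : ℝ) + 1) * h) =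
        -(G (opSin h G (ψ (t₀ + k * h)))) + opCos h G (φ (t₀ + k * h)) +
          ∫ τ in (0:ℝ)..h,
            opCos (h - τ) G (m (t₀ + k * h + τ) (ψ (t₀ + k * h + τ)))) :
    ∀ k : ℕ, 1 ≤ k → k ≤ K →
      (ψ (t₀ + k * h) =
        opCos (k * h) G (ψ t₀) + Ginv (opSin (k * h) G (φ t₀)) +
          ∑ l ∈ Finset.range k,
            ∫ τ in (0:ℝ)..h,
              Ginv (opSin (((k : ℝ) - l) * h - τ) G
                (m (t₀ + l * h + τ) (ψ (t₀ + l * h + τ))))) ∧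
      (φ (t₀ + k * h) =
        -(G (opSin (k * h) G (ψ t₀))) + opCos (k * h) G (φ t₀) +
          ∑ l ∈ Finset.range k,
            ∫ τ in (0:ℝ)..h,
              opCos (((k : ℝ) - l) * h - τ) G
                (m (t₀ + l * h + τ) (ψ (t₀ + l * h + τ)))) :=
  iterated_duhamel_representation_general G Ginv hGr hGl t₀ h K m hm ψ φ hψ hstepψ hstepφ
end

section
/- Integration-by-parts bound for the oscillatory Taylor remainder (key estimate in the proof of Lemma 3.3): let τ ≥ 0, ω ∈ ℝ, and let f : ℝ → E be continuously differentiable on [0,τ] with derivative f'. Then ‖∫₀^τ (τ−s)² · (iω) · e^{iωs} · f(s) ds‖ ≤ min{ |ω| · (τ³/3) · sup_{s∈[0,τ]} ‖f(s)‖ , 2τ² · sup_{s∈[0,τ]} ‖f(s)‖ + (τ³/3) · sup_{s∈[0,τ]} ‖f'(s)‖ }. -/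
/-! The first bound is the triangle inequality for the integral, since `‖e^{iωs}‖ = 1` and
`∫₀^τ (τ - s)² ds = τ³/3`. For the second, `(τ - s)² iω e^{iωs}` is the derivative of the weight
`(τ - s)² e^{iωs}` plus `2 (τ - s) e^{iωs}`. Integrating by parts moves the derivative onto `f`;
the weight vanishes at `s = τ`, so what remains is the boundary term `-τ² f(0)` and two integrals
without the factor `ω`, bounded by `τ² sup ‖f‖` and `(τ³/3) sup ‖f'‖`. -/

open Complex Set intervalIntegral

theorem IsCompact.le_ciSup_of_continuousOn {X : Type*} [TopologicalSpace X] {K : Set X}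
    (hK : IsCompact K) {g : X → ℝ} (hg : ContinuousOn g K) {x : X} (hx : x ∈ K) :
    g x ≤ ⨆ y : K, g y :=
  le_ciSup (by simpa [image_eq_range] using hK.bddAbove_image hg) (⟨x, hx⟩ : K)

theorem intervalIntegral.norm_integral_smul_le {𝕜 E : Type*} [NormedField 𝕜]
    [NormedAddCommGroup E] [NormedSpace 𝕜 E] [NormedSpace ℝ E] {a b M : ℝ} (hab : a ≤ b)
    {φ : ℝ → 𝕜} {ψ : ℝ → ℝ} {f : ℝ → E} (hφ : ∀ s ∈ Icc a b, ‖φ s‖ ≤ ψ s)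
    (hf : ∀ s ∈ Icc a b, ‖f s‖ ≤ M) (hψ : IntervalIntegrable ψ MeasureTheory.volume a b) :
    ‖∫ s in a..b, φ s • f s‖ ≤ M * ∫ s in a..b, ψ s := by
  rw [← integral_const_mul]
  refine norm_integral_le_of_norm_le hab (MeasureTheory.ae_of_all _ fun s hs => ?_) (hψ.const_mul M)
  have hs : s ∈ Icc a b := Ioc_subset_Icc_self hs
  rw [norm_smul, mul_comm M]
  exact mul_le_mul (hφ s hs) (hf s hs) (norm_nonneg _) ((norm_nonneg _).trans (hφ s hs))

theorem integral_sub_pow (τ : ℝ) (n : ℕ) :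
    ∫ s in (0 : ℝ)..τ, (τ - s) ^ n = τ ^ (n + 1) / (n + 1) := by
  rw [integral_comp_sub_left (· ^ n), sub_self, sub_zero, integral_pow]
  simp [zero_pow n.succ_ne_zero]

@[simp]
theorem Complex.norm_exp_I_mul_ofReal_mul (ω s : ℝ) : ‖exp (I * ω * s)‖ = 1 := by
  rw [mul_assoc, ← ofReal_mul, norm_exp_I_mul_ofReal]

theorem hasDerivAt_sq_mul_exp (τ ω s : ℝ) :
    HasDerivAt (fun t : ℝ => ((τ - t : ℝ) : ℂ) ^ 2 * exp (I * ω * t))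
      (-(2 * ((τ - s : ℝ) : ℂ)) * exp (I * ω * s) +
        ((τ - s : ℝ) : ℂ) ^ 2 * (I * ω) * exp (I * ω * s)) s := by
  have hlin : HasDerivAt (fun t : ℝ => ((τ - t : ℝ) : ℂ)) (-1) s := by
    simpa using ((hasDerivAt_id s).const_sub τ).ofReal_comp
  have hexp : HasDerivAt (fun t : ℝ => exp (I * ω * t)) (exp (I * ω * s) * (I * ω)) s := by
    simpa using ((hasDerivAt_id s).ofReal_comp.const_mul (I * ω)).cexp
  exact ((hlin.fun_pow 2).mul hexp).congr_deriv (by push_cast; ring)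

section

variable {E : Type*} [NormedAddCommGroup E] [NormedSpace ℂ E] {τ ω M M' : ℝ} {f f' : ℝ → E}

theorem norm_integral_sq_mul_exp_smul_le (hτ : 0 ≤ τ) (hM : ∀ s ∈ Icc 0 τ, ‖f s‖ ≤ M) :
    ‖∫ s in (0 : ℝ)..τ, (((τ - s : ℝ) : ℂ) ^ 2 * (I * ω) * exp (I * ω * s)) • f s‖ ≤
      |ω| * (τ ^ 3 / 3) * M :=
  calc _ ≤ M * ∫ s in (0 : ℝ)..τ, (τ - s) ^ 2 * |ω| :=
        norm_integral_smul_le hτ (fun s _ => by simp [-ofReal_sub]) hM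
          ((by fun_prop : Continuous _).intervalIntegrable _ _)
    _ = |ω| * (τ ^ 3 / 3) * M := by rw [integral_mul_const, integral_sub_pow]; ring

variable [CompleteSpace E]

theorem integral_sq_mul_exp_smul_eq (hderiv : ∀ s ∈ uIcc 0 τ, HasDerivAt f (f' s) s)
    (hcont : ContinuousOn f' (uIcc 0 τ)) :
    ∫ s in (0 : ℝ)..τ, (((τ - s : ℝ) : ℂ) ^ 2 * (I * ω) * exp (I * ω * s)) • f s =
      -((τ : ℂ) ^ 2 • f 0) + (∫ s in (0 : ℝ)..τ, (2 * ((τ - s : ℝ) : ℂ) * exp (I * ω * s)) • f s)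
        - ∫ s in (0 : ℝ)..τ, (((τ - s : ℝ) : ℂ) ^ 2 * exp (I * ω * s)) • f' s := by
  have hfc : ContinuousOn f (uIcc 0 τ) := fun s hs => (hderiv s hs).continuousAt.continuousWithinAt
  have hparts := integral_smul_deriv_eq_deriv_smul (fun s _ => hasDerivAt_sq_mul_exp τ ω s) hderiv
    (Continuous.intervalIntegrable (by fun_prop) _ _) hcont.intervalIntegrable
  have hsplit : ∫ s in (0 : ℝ)..τ, (((τ - s : ℝ) : ℂ) ^ 2 * (I * ω) * exp (I * ω * s)) • f s =
      (∫ s in (0 : ℝ)..τ, (-(2 * ((τ - s : ℝ) : ℂ)) * exp (I * ω * s) +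
        ((τ - s : ℝ) : ℂ) ^ 2 * (I * ω) * exp (I * ω * s)) • f s) +
      ∫ s in (0 : ℝ)..τ, (2 * ((τ - s : ℝ) : ℂ) * exp (I * ω * s)) • f s := by
    rw [← integral_add (ContinuousOn.intervalIntegrable (by fun_prop))
      (ContinuousOn.intervalIntegrable (by fun_prop))]
    congr 1 with s
    rw [← add_smul]
    congr 1
    ring
  rw [hsplit, hparts]
  simp only [ofReal_sub, sub_self, ofReal_zero, sub_zero, ne_eq, OfNat.ofNat_ne_zero,
    not_false_eq_true, zero_pow, zero_mul, zero_smul, mul_zero, exp_zero, mul_one]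
  abel

theorem norm_integral_sq_mul_exp_smul_le_of_hasDerivAt (hτ : 0 ≤ τ)
    (hderiv : ∀ s ∈ Icc 0 τ, HasDerivAt f (f' s) s) (hcont : ContinuousOn f' (Icc 0 τ))
    (hM : ∀ s ∈ Icc 0 τ, ‖f s‖ ≤ M) (hM' : ∀ s ∈ Icc 0 τ, ‖f' s‖ ≤ M') :
    ‖∫ s in (0 : ℝ)..τ, (((τ - s : ℝ) : ℂ) ^ 2 * (I * ω) * exp (I * ω * s)) • f s‖ ≤
      2 * τ ^ 2 * M + τ ^ 3 / 3 * M' := by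
  have hIcc : uIcc 0 τ = Icc 0 τ := uIcc_of_le hτ
  have hboundary : ‖(τ : ℂ) ^ 2 • f 0‖ ≤ τ ^ 2 * M := by
    rw [norm_smul, norm_pow, norm_real, Real.norm_of_nonneg hτ]
    exact mul_le_mul_of_nonneg_left (hM 0 ⟨le_rfl, hτ⟩) (sq_nonneg τ)
  rw [integral_sq_mul_exp_smul_eq (hIcc ▸ hderiv) (hIcc ▸ hcont)]
  calc _ ≤ ‖(τ : ℂ) ^ 2 • f 0‖
        + ‖∫ s in (0 : ℝ)..τ, (2 * ((τ - s : ℝ) : ℂ) * exp (I * ω * s)) • f s‖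
        + ‖∫ s in (0 : ℝ)..τ, (((τ - s : ℝ) : ℂ) ^ 2 * exp (I * ω * s)) • f' s‖ := by
        grw [norm_sub_le, norm_add_le, norm_neg]
    _ ≤ τ ^ 2 * M + M * (∫ s in (0 : ℝ)..τ, 2 * (τ - s) ^ 1)
        + M' * ∫ s in (0 : ℝ)..τ, (τ - s) ^ 2 := by
        gcongr
        · exact norm_integral_smul_le hτ
            (fun s hs => by simp [-ofReal_sub, abs_of_nonneg (sub_nonneg.2 hs.2)]) hM
            ((by fun_prop : Continuous _).intervalIntegrable _ _)
        · exact norm_integral_smul_le hτ (fun s _ => by simp [-ofReal_sub]) hM'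
            ((by fun_prop : Continuous _).intervalIntegrable _ _)
    _ = _ := by rw [integral_const_mul, integral_sub_pow, integral_sub_pow]; ring

end

/-- Integration-by-parts bound for the oscillatory Taylor remainder:
for `τ ≥ 0`, `ω ∈ ℝ` and `f : ℝ → E` continuously differentiable on `[0,τ]`,
`‖∫₀^τ (τ−s)²·(iω)·e^{iωs}·f(s) ds‖` is bounded by the minimum of
`|ω|·(τ³/3)·sup‖f‖` and `2τ²·sup‖f‖ + (τ³/3)·sup‖f'‖`. -/
theorem oscillatory_taylor_remainder_bound
    {E : Type*} [NormedAddCommGroup E] [NormedSpace ℂ E] [CompleteSpace E]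
    (τ : ℝ) (hτ : 0 ≤ τ) (ω : ℝ) (f f' : ℝ → E)
    (hderiv : ∀ s ∈ Set.Icc (0 : ℝ) τ, HasDerivAt f (f' s) s)
    (hcont : ContinuousOn f' (Set.Icc (0 : ℝ) τ)) :
    ‖∫ s in (0:ℝ)..τ,
        ((((τ - s : ℝ) : ℂ) ^ 2 * (Complex.I * (ω : ℂ)) *
          Complex.exp (Complex.I * (ω : ℂ) * (s : ℂ))) • f s)‖ ≤
      min (|ω| * (τ ^ 3 / 3) * ⨆ s : Set.Icc (0 : ℝ) τ, ‖f s‖)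
        (2 * τ ^ 2 * (⨆ s : Set.Icc (0 : ℝ) τ, ‖f s‖) +
          (τ ^ 3 / 3) * ⨆ s : Set.Icc (0 : ℝ) τ, ‖f' s‖) := by
  have hfc : ContinuousOn f (Icc 0 τ) := fun s hs => (hderiv s hs).continuousAt.continuousWithinAt
  have hM : ∀ s ∈ Icc 0 τ, ‖f s‖ ≤ ⨆ s : Icc (0 : ℝ) τ, ‖f s‖ :=
    fun s => isCompact_Icc.le_ciSup_of_continuousOn hfc.norm
  have hM' : ∀ s ∈ Icc 0 τ, ‖f' s‖ ≤ ⨆ s : Icc (0 : ℝ) τ, ‖f' s‖ :=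
    fun s => isCompact_Icc.le_ciSup_of_continuousOn hcont.norm
  exact le_min (norm_integral_sq_mul_exp_smul_le hτ hM)
    (norm_integral_sq_mul_exp_smul_le_of_hasDerivAt hτ hderiv hcont hM hM')
end

section
/- Integration-by-parts bound for the oscillatory finite-difference remainder (key estimate in the proof of Lemma 3.3): let h > 0, ω ∈ ℝ, and let f : ℝ → E be continuously differentiable on [0,h] with derivative f'. Then ‖(1/h) · ∫₀ʰ s · (iω) · e^{iωs} · f(s) ds‖ ≤ min{ |ω| · (h/2) · sup_{s∈[0,h]} ‖f(s)‖ , 2 · sup_{s∈[0,h]} ‖f(s)‖ + (h/2) · sup_{s∈[0,h]} ‖f'(s)‖ }. -/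
/-!
Write `e(s) = exp(iωs)`, so that `‖e‖ = 1` and the integrand is `e'(s) • (s • f(s))`. Bounding the
integrand pointwise by `|ω| s sup‖f‖` gives the first bound. For the second, integration by parts
moves the derivative onto `s • f(s)`, whose value vanishes at `0`:
`∫₀ʰ e' • s f = e(h) • h f(h) - ∫₀ʰ e • (f + s f')`, and each term is at most
`h sup‖f‖`, resp. `h sup‖f‖ + (h²/2) sup‖f'‖`.
-/

open Set intervalIntegral Complex
open scoped Interval

theorem norm_le_iSup_norm_of_continuousOn {X F : Type*} [TopologicalSpace X]
    [SeminormedAddCommGroup F] {K : Set X} (hK : IsCompact K) {g : X → F}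
    (hg : ContinuousOn g K) {x : X} (hx : x ∈ K) : ‖g x‖ ≤ ⨆ y : K, ‖g y‖ := by
  have hbdd := (hK.image_of_continuousOn hg.norm).bddAbove
  rw [image_eq_range] at hbdd
  exact le_ciSup hbdd ⟨x, hx⟩

section IntegralBounds

variable {E : Type*} [NormedAddCommGroup E] [NormedSpace ℝ E]

theorem norm_integral_le_of_norm_le_add_mul {g : ℝ → E} {h A B : ℝ} (hh : 0 ≤ h)
    (hg : ∀ s ∈ Ioc 0 h, ‖g s‖ ≤ A + B * s) :
    ‖∫ s in 0..h, g s‖ ≤ A * h + B * (h ^ 2 / 2) := by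
  refine (norm_integral_le_of_norm_le hh (.of_forall hg)
    (by apply Continuous.intervalIntegrable; fun_prop)).trans_eq ?_
  rw [integral_add intervalIntegrable_const (by apply Continuous.intervalIntegrable; fun_prop),
    intervalIntegral.integral_const_mul, integral_id, intervalIntegral.integral_const]
  simp only [sub_zero, smul_eq_mul]
  ring

variable {𝕜 : Type*} [NontriviallyNormedField 𝕜] [NormedSpace 𝕜 E]

theorem norm_integral_smul_id_smul_le {g : ℝ → 𝕜} {f : ℝ → E} {h K M : ℝ} (hh : 0 ≤ h)
    (hg : ∀ s ∈ Icc 0 h, ‖g s‖ ≤ K) (hf : ∀ s ∈ Icc 0 h, ‖f s‖ ≤ M) :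
    ‖∫ s in 0..h, g s • s • f s‖ ≤ K * M * (h ^ 2 / 2) := by
  have := norm_integral_le_of_norm_le_add_mul (g := fun s => g s • s • f s) (A := 0)
    (B := K * M) hh fun s hs => by
      have hs' := Ioc_subset_Icc_self hs
      rw [norm_smul, norm_smul, Real.norm_of_nonneg hs.1.le, zero_add, mul_assoc,
        mul_comm M]
      exact mul_le_mul (hg s hs') (mul_le_mul_of_nonneg_left (hf s hs') hs.1.le)
        (mul_nonneg hs.1.le (norm_nonneg _)) ((norm_nonneg _).trans (hg s hs'))
  simpa using this

variable [NormedAlgebra ℝ 𝕜] [IsScalarTower ℝ 𝕜 E] [CompleteSpace E]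

theorem integral_deriv_smul_id_smul_eq {a b : ℝ} {u u' : ℝ → 𝕜} {f f' : ℝ → E}
    (hu : ∀ s ∈ [[a, b]], HasDerivAt u (u' s) s) (hf : ∀ s ∈ [[a, b]], HasDerivAt f (f' s) s)
    (hu' : IntervalIntegrable u' MeasureTheory.volume a b)
    (hf' : IntervalIntegrable f' MeasureTheory.volume a b) :
    ∫ s in a..b, u' s • s • f s =
      u b • b • f b - u a • a • f a - ∫ s in a..b, u s • (f s + s • f' s) := by
  have hv : ∀ s ∈ [[a, b]], HasDerivAt (fun t : ℝ => t • f t) (f s + s • f' s) s :=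
    fun s hs => ((hasDerivAt_id' s).smul (hf s hs)).congr_deriv (by rw [one_smul, add_comm])
  have hfc : ContinuousOn f [[a, b]] := fun s hs => (hf s hs).continuousAt.continuousWithinAt
  rw [integral_smul_deriv_eq_deriv_smul hu hv hu'
    (hfc.intervalIntegrable.add (hf'.continuousOn_smul continuousOn_id))]
  abel

theorem norm_integral_deriv_smul_id_smul_le {u u' : ℝ → 𝕜} {f f' : ℝ → E} {h C M M' : ℝ}
    (hh : 0 ≤ h) (hu : ∀ s ∈ Icc 0 h, HasDerivAt u (u' s) s)
    (hf : ∀ s ∈ Icc 0 h, HasDerivAt f (f' s) s)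
    (hu' : IntervalIntegrable u' MeasureTheory.volume 0 h)
    (hf' : IntervalIntegrable f' MeasureTheory.volume 0 h)
    (huC : ∀ s ∈ Icc 0 h, ‖u s‖ ≤ C) (hfM : ∀ s ∈ Icc 0 h, ‖f s‖ ≤ M)
    (hf'M : ∀ s ∈ Icc 0 h, ‖f' s‖ ≤ M') :
    ‖∫ s in 0..h, u' s • s • f s‖ ≤ C * (2 * M * h + M' * (h ^ 2 / 2)) := by
  have hparts := integral_deriv_smul_id_smul_eq (by rwa [uIcc_of_le hh]) (by rwa [uIcc_of_le hh])
    hu' hf'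
  have hboundary : ‖u h • h • f h‖ ≤ C * (M * h) := by
    have hh' : h ∈ Icc 0 h := right_mem_Icc.mpr hh
    rw [norm_smul, norm_smul, Real.norm_of_nonneg hh, mul_comm M]
    exact mul_le_mul (huC h hh') (mul_le_mul_of_nonneg_left (hfM h hh') hh) (by positivity)
      ((norm_nonneg _).trans (huC h hh'))
  have hremainder := norm_integral_le_of_norm_le_add_mul (g := fun s => u s • (f s + s • f' s))
    (A := C * M) (B := C * M') hh fun s hs => by
      have hs' := Ioc_subset_Icc_self hs
      have hsum : ‖f s + s • f' s‖ ≤ M + M' * s := by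
        refine (norm_add_le _ _).trans (add_le_add (hfM s hs') ?_)
        rw [norm_smul, Real.norm_of_nonneg hs.1.le, mul_comm M']
        exact mul_le_mul_of_nonneg_left (hf'M s hs') hs.1.le
      calc ‖u s • (f s + s • f' s)‖ ≤ C * (M + M' * s) := by
            rw [norm_smul]
            exact mul_le_mul (huC s hs') hsum (norm_nonneg _) ((norm_nonneg _).trans (huC s hs'))
        _ = C * M + C * M' * s := by ring
  rw [hparts, zero_smul, smul_zero, sub_zero]
  calc _ ≤ C * (M * h) + (C * M * h + C * M' * (h ^ 2 / 2)) :=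
        (norm_sub_le _ _).trans (add_le_add hboundary hremainder)
    _ = C * (2 * M * h + M' * (h ^ 2 / 2)) := by ring

end IntegralBounds

/-- Integration-by-parts bound for the oscillatory finite-difference
remainder: for `h > 0`, `ω ∈ ℝ` and `f : ℝ → E` continuously differentiable on `[0,h]`,
`‖(1/h)·∫₀ʰ s·(iω)·e^{iωs}·f(s) ds‖` is bounded by the minimum of
`|ω|·(h/2)·sup‖f‖` and `2·sup‖f‖ + (h/2)·sup‖f'‖`. -/
theorem oscillatory_finite_difference_remainder_bound
    {E : Type*} [NormedAddCommGroup E] [NormedSpace ℂ E] [CompleteSpace E]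
    (h : ℝ) (hh : 0 < h) (ω : ℝ) (f f' : ℝ → E)
    (hderiv : ∀ s ∈ Set.Icc (0 : ℝ) h, HasDerivAt f (f' s) s)
    (hcont : ContinuousOn f' (Set.Icc (0 : ℝ) h)) :
    ‖(1 / h) • ∫ s in (0:ℝ)..h,
        (((s : ℂ) * (Complex.I * (ω : ℂ)) *
          Complex.exp (Complex.I * (ω : ℂ) * (s : ℂ))) • f s)‖ ≤
      min (|ω| * (h / 2) * ⨆ s : Set.Icc (0 : ℝ) h, ‖f s‖)
        (2 * (⨆ s : Set.Icc (0 : ℝ) h, ‖f s‖) +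
          (h / 2) * ⨆ s : Set.Icc (0 : ℝ) h, ‖f' s‖) := by
  set M := ⨆ s : Icc (0 : ℝ) h, ‖f s‖
  set M' := ⨆ s : Icc (0 : ℝ) h, ‖f' s‖
  set e : ℝ → ℂ := fun s => exp (I * ω * s)
  have he (s : ℝ) : ‖e s‖ = 1 := by simp [e, norm_exp]
  have he' (s : ℝ) : HasDerivAt e (e s * (I * ω)) s := by
    simpa using ((hasDerivAt_id' s).ofReal_comp.const_mul (I * ω)).cexp
  have hintegrand : (fun s : ℝ => ((s : ℂ) * (I * ω) * e s) • f s) =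
      fun s => (e s * (I * ω)) • s • f s := by
    ext s
    rw [← Complex.coe_smul, smul_smul]
    congr 1
    ring
  have hM (s : ℝ) (hs : s ∈ Icc 0 h) : ‖f s‖ ≤ M := norm_le_iSup_norm_of_continuousOn
    isCompact_Icc (fun t ht => (hderiv t ht).continuousAt.continuousWithinAt) hs
  have hM' (s : ℝ) (hs : s ∈ Icc 0 h) : ‖f' s‖ ≤ M' :=
    norm_le_iSup_norm_of_continuousOn isCompact_Icc hcont hs
  rw [hintegrand, norm_smul, Real.norm_of_nonneg (by positivity), le_min_iff]
  constructor
  · calc 1 / h * _ ≤ 1 / h * (|ω| * M * (h ^ 2 / 2)) := by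
          gcongr
          exact norm_integral_smul_id_smul_le hh.le (fun s _ => by simp [he]) hM
      _ = |ω| * (h / 2) * M := by field_simp
  · calc 1 / h * _ ≤ 1 / h * (1 * (2 * M * h + M' * (h ^ 2 / 2))) := by
          gcongr
          exact norm_integral_deriv_smul_id_smul_le hh.le (fun s _ => he' s) hderiv
            (by apply Continuous.intervalIntegrable; fun_prop)
            (hcont.intervalIntegrable_of_Icc hh.le) (fun s _ => (he s).le) hM hM'
      _ = 2 * M + h / 2 * M' := by field_simp
end

section
/- Filon interpolation error bound (Remark 2.4): let h > 0 and let f : ℝ → E be three times continuously differentiable on [0,h], with derivatives f', f'', f'''. Define the quadratic Filon interpolant p(s) := ((f'(h) − f'(0))/(2h)) · s² + f'(0) · s + f(0). Then for every s ∈ [0,h], ‖f(s) − p(s)‖ ≤ (h³/4) · sup_{ξ∈[0,h]} ‖f'''(ξ)‖. -/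
/-!
The error `G = f - p` satisfies `G 0 = 0`, `G' 0 = G' h = 0` (the quadratic coefficient of `p`
is chosen for the second one) and `G''' = f'''`. Combining the first-order Taylor expansions of
`G'` at `t` towards both endpoints gives the linear-interpolation estimate
`‖G' t‖ ≤ M t (h - t) / 2 ≤ M h t / 2`, where `M = sup ‖f'''‖`, and integrating from `0` gives
`‖G s‖ ≤ M h s² / 4 ≤ M h³ / 4`.
-/

open Set

theorem norm_le_iSup_norm_of_continuousOn_s9 {α F : Type*} [TopologicalSpace α]
    [SeminormedAddCommGroup F] {φ : α → F} {s : Set α} (hs : IsCompact s)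
    (hφ : ContinuousOn φ s) {x : α} (hx : x ∈ s) : ‖φ x‖ ≤ ⨆ ξ : s, ‖φ ξ‖ :=
  le_ciSup_set (hs.bddAbove_image hφ.norm) hx

section

variable {E : Type*} [NormedAddCommGroup E] [NormedSpace ℝ E]

theorem norm_sub_le_sub_of_norm_hasDerivAt_le {φ φ' : ℝ → E} {ψ ψ' : ℝ → ℝ} {a b : ℝ}
    (hab : a ≤ b) (hφ : ∀ x ∈ Icc a b, HasDerivAt φ (φ' x) x)
    (hψ : ∀ x, HasDerivAt ψ (ψ' x) x) (bound : ∀ x ∈ Icc a b, ‖φ' x‖ ≤ ψ' x) :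
    ‖φ b - φ a‖ ≤ ψ b - ψ a :=
  image_norm_le_of_norm_deriv_right_le_deriv_boundary (f := fun x ↦ φ x - φ a)
    (fun x hx ↦ ((hφ x hx).continuousAt.sub continuousAt_const).continuousWithinAt)
    (fun x hx ↦ ((hφ x (Ico_subset_Icc_self hx)).sub_const _).hasDerivWithinAt)
    (by simp) (fun x ↦ (hψ x).sub_const (ψ a))
    (fun x hx ↦ bound x (Ico_subset_Icc_self hx)) (right_mem_Icc.2 hab)

theorem norm_image_sub_sub_smul_le_of_norm_deriv2_le {g g' g'' : ℝ → E} {a b M x y : ℝ}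
    (hg : ∀ z ∈ Icc a b, HasDerivAt g (g' z) z)
    (hg' : ∀ z ∈ Icc a b, HasDerivAt g' (g'' z) z)
    (bound : ∀ z ∈ Icc a b, ‖g'' z‖ ≤ M) (hx : x ∈ Icc a b) (hy : y ∈ Icc a b) :
    ‖g y - g x - (y - x) • g' x‖ ≤ M * (y - x) ^ 2 / 2 := by
  set φ : ℝ → E := fun z ↦ g z - z • g' x
  have hφ : ∀ z ∈ Icc a b, HasDerivAt φ (g' z - g' x) z := fun z hz ↦
    ((hg z hz).sub ((hasDerivAt_id z).smul_const (g' x))).congr_deriv (by simp)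
  have hφ' : ∀ z ∈ Icc a b, ‖g' z - g' x‖ ≤ M * |z - x| := fun z hz ↦ by
    simpa [Real.norm_eq_abs] using (convex_Icc a b).norm_image_sub_le_of_norm_hasDerivWithin_le
      (fun z hz ↦ (hg' z hz).hasDerivWithinAt) bound hx hz
  have hsub : g y - g x - (y - x) • g' x = φ y - φ x := by simp only [φ, sub_smul]; abel
  rw [hsub]
  rcases le_total x y with hxy | hyx
  · have hsubset : Icc x y ⊆ Icc a b := Icc_subset_Icc hx.1 hy.2
    have hψ (z : ℝ) : HasDerivAt (fun z ↦ M * (z - x) ^ 2 / 2) (M * (z - x)) z :=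
      (((((hasDerivAt_id' z).sub_const x).fun_pow 2).const_mul M).div_const 2).congr_deriv
        (by ring)
    have bound' : ∀ z ∈ Icc x y, ‖g' z - g' x‖ ≤ M * (z - x) := fun z hz ↦ by
      simpa [abs_of_nonneg (sub_nonneg.2 hz.1)] using hφ' z (hsubset hz)
    exact (norm_sub_le_sub_of_norm_hasDerivAt_le hxy (fun z hz ↦ hφ z (hsubset hz)) hψ
      bound').trans_eq (by ring)
  · have hsubset : Icc y x ⊆ Icc a b := Icc_subset_Icc hy.1 hx.2
    have hψ (z : ℝ) : HasDerivAt (fun z ↦ -(M * (x - z) ^ 2 / 2)) (M * (x - z)) z :=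
      (((((hasDerivAt_id' z).const_sub x).fun_pow 2).const_mul M).div_const 2).neg.congr_deriv
        (by ring)
    have bound' : ∀ z ∈ Icc y x, ‖g' z - g' x‖ ≤ M * (x - z) := fun z hz ↦ by
      simpa [abs_of_nonpos (sub_nonpos.2 hz.2)] using hφ' z (hsubset hz)
    rw [norm_sub_rev]
    exact (norm_sub_le_sub_of_norm_hasDerivAt_le hyx (fun z hz ↦ hφ z (hsubset hz)) hψ
      bound').trans_eq (by ring)

theorem norm_image_le_of_eq_zero_of_norm_deriv2_le {g g' g'' : ℝ → E} {a b M t : ℝ}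
    (hg : ∀ z ∈ Icc a b, HasDerivAt g (g' z) z)
    (hg' : ∀ z ∈ Icc a b, HasDerivAt g' (g'' z) z)
    (bound : ∀ z ∈ Icc a b, ‖g'' z‖ ≤ M) (ha : g a = 0) (hb : g b = 0) (ht : t ∈ Icc a b) :
    ‖g t‖ ≤ M * (t - a) * (b - t) / 2 := by
  rcases (ht.1.trans ht.2).eq_or_lt with rfl | hab
  · simp [le_antisymm ht.2 ht.1, ha]
  have taylor_a :=
    norm_image_sub_sub_smul_le_of_norm_deriv2_le hg hg' bound ht (left_mem_Icc.2 hab.le)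
  have taylor_b :=
    norm_image_sub_sub_smul_le_of_norm_deriv2_le hg hg' bound ht (right_mem_Icc.2 hab.le)
  -- Weighting the Taylor expansions at `t` towards `a` and `b` cancels the `g' t` terms.
  have key : (b - a) • g t = -((b - t) • (g a - g t - (a - t) • g' t)
      + (t - a) • (g b - g t - (b - t) • g' t)) := by
    rw [ha, hb]; module
  have hta : 0 ≤ t - a := sub_nonneg.2 ht.1
  have hbt : 0 ≤ b - t := sub_nonneg.2 ht.2
  refine le_of_mul_le_mul_left ?_ (sub_pos.2 hab)
  calc (b - a) * ‖g t‖ = ‖(b - a) • g t‖ := by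
        rw [norm_smul, Real.norm_of_nonneg (sub_pos.2 hab).le]
    _ ≤ (b - t) * ‖g a - g t - (a - t) • g' t‖ + (t - a) * ‖g b - g t - (b - t) • g' t‖ := by
      rw [key, norm_neg]
      refine (norm_add_le _ _).trans_eq ?_
      rw [norm_smul, norm_smul, Real.norm_of_nonneg hta, Real.norm_of_nonneg hbt]
    _ ≤ (b - t) * (M * (a - t) ^ 2 / 2) + (t - a) * (M * (b - t) ^ 2 / 2) := by gcongr
    _ = (b - a) * (M * (t - a) * (b - t) / 2) := by ring

theorem norm_image_sub_le_of_deriv_eq_zero_of_norm_deriv3_le {g g' g'' g''' : ℝ → E}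
    {a b M s : ℝ} (hg : ∀ z ∈ Icc a b, HasDerivAt g (g' z) z)
    (hg' : ∀ z ∈ Icc a b, HasDerivAt g' (g'' z) z)
    (hg'' : ∀ z ∈ Icc a b, HasDerivAt g'' (g''' z) z)
    (bound : ∀ z ∈ Icc a b, ‖g''' z‖ ≤ M) (ha : g' a = 0) (hb : g' b = 0) (hs : s ∈ Icc a b) :
    ‖g s - g a‖ ≤ M * (b - a) * (s - a) ^ 2 / 4 := by
  have hM : 0 ≤ M := (norm_nonneg _).trans (bound a (left_mem_Icc.2 (hs.1.trans hs.2)))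
  have hg'_le : ∀ z ∈ Icc a s, ‖g' z‖ ≤ M * (b - a) / 2 * (z - a) := fun z hz ↦ by
    have hz' : z ∈ Icc a b := ⟨hz.1, hz.2.trans hs.2⟩
    refine (norm_image_le_of_eq_zero_of_norm_deriv2_le hg' hg'' bound ha hb hz').trans ?_
    nlinarith [mul_nonneg hM (mul_nonneg (sub_nonneg.2 hz'.1) (sub_nonneg.2 hz'.1))]
  have hψ (z : ℝ) :
      HasDerivAt (fun z ↦ M * (b - a) / 4 * (z - a) ^ 2) (M * (b - a) / 2 * (z - a)) z :=
    ((((hasDerivAt_id' z).sub_const a).fun_pow 2).const_mul _).congr_deriv (by ring)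
  exact (norm_sub_le_sub_of_norm_hasDerivAt_le hs.1
    (fun z hz ↦ hg z ⟨hz.1, hz.2.trans hs.2⟩) hψ hg'_le).trans_eq (by ring)

end

/-- **Remark 2.4, Filon interpolation error.** If `f` is three times
continuously differentiable on `[0,h]` and
`p(s) := ((f'(h) − f'(0))/(2h))·s² + f'(0)·s + f(0)`, then for all `s ∈ [0,h]`,
`‖f(s) − p(s)‖ ≤ (h³/4)·sup_{[0,h]}‖f'''‖`. -/
theorem filon_interpolation_error_bound
    {E : Type*} [NormedAddCommGroup E] [NormedSpace ℝ E]
    (h : ℝ) (hh : 0 < h) (f f' f'' f''' : ℝ → E)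
    (hd1 : ∀ s ∈ Set.Icc (0 : ℝ) h, HasDerivAt f (f' s) s)
    (hd2 : ∀ s ∈ Set.Icc (0 : ℝ) h, HasDerivAt f' (f'' s) s)
    (hd3 : ∀ s ∈ Set.Icc (0 : ℝ) h, HasDerivAt f'' (f''' s) s)
    (hcont : ContinuousOn f''' (Set.Icc (0 : ℝ) h)) :
    ∀ s ∈ Set.Icc (0 : ℝ) h,
      ‖f s - ((s ^ 2 / (2 * h)) • (f' h - f' 0) + s • f' 0 + f 0)‖ ≤
        (h ^ 3 / 4) * ⨆ ξ : Set.Icc (0 : ℝ) h, ‖f''' ξ‖ := by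
  intro s hs
  set M := ⨆ ξ : Set.Icc (0 : ℝ) h, ‖f''' ξ‖
  have hM : ∀ ξ ∈ Icc 0 h, ‖f''' ξ‖ ≤ M := fun ξ ↦
    norm_le_iSup_norm_of_continuousOn_s9 isCompact_Icc hcont
  set c := h⁻¹ • (f' h - f' 0)
  set G : ℝ → E := fun s ↦ f s - ((s ^ 2 / (2 * h)) • (f' h - f' 0) + s • f' 0 + f 0)
  set G' : ℝ → E := fun s ↦ f' s - (s • c + f' 0)
  have hG : ∀ x ∈ Icc 0 h, HasDerivAt G (G' x) x := fun x hx ↦ by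
    have hp := ((((hasDerivAt_pow 2 x).div_const (2 * h)).smul_const (f' h - f' 0)).add
      ((hasDerivAt_id' x).smul_const (f' 0))).add_const (f 0)
    refine ((hd1 x hx).sub hp).congr_deriv ?_
    simp only [G', c, smul_smul]
    field_simp
    module
  have hG' : ∀ x ∈ Icc 0 h, HasDerivAt G' (f'' x - c) x := fun x hx ↦
    ((hd2 x hx).sub (((hasDerivAt_id' x).smul_const c).add_const (f' 0))).congr_deriv (by simp)
  have hG'' : ∀ x ∈ Icc 0 h, HasDerivAt (fun x ↦ f'' x - c) (f''' x) x := fun x hx ↦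
    (hd3 x hx).sub_const c
  have hG'h : G' h = 0 := by simp [G', c, smul_smul, hh.ne']
  have hM0 : 0 ≤ M := (norm_nonneg _).trans (hM 0 (left_mem_Icc.2 hh.le))
  calc ‖G s‖ = ‖G s - G 0‖ := by simp [G]
    _ ≤ M * (h - 0) * (s - 0) ^ 2 / 4 :=
      norm_image_sub_le_of_deriv_eq_zero_of_norm_deriv3_le hG hG' hG'' hM (by simp [G']) hG'h hs
    _ ≤ h ^ 3 / 4 * M := by
      nlinarith [mul_nonneg (mul_nonneg hM0 hh.le)
        (mul_nonneg (sub_nonneg.2 hs.2) (add_nonneg hh.le hs.1))]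
end

section
/- Filon quadrature error is uniform in the frequency (equation (2.10) of the paper): let h > 0 and let f : ℝ → E be three times continuously differentiable on [0,h] with derivatives f', f'', f'''. Define p(s) := ((f'(h) − f'(0))/(2h)) · s² + f'(0) · s + f(0). Then for every ω ∈ ℝ, ‖∫₀ʰ (f(s) − p(s)) · e^{iωs} ds‖ ≤ (h⁴/4) · sup_{ξ∈[0,h]} ‖f'''(ξ)‖; in particular the bound is independent of ω. -/
/-!
With `M = sup ‖f'''‖`, the error `g = f - p` vanishes at `0` and its derivative is
`r s - (s / h) • r h`, where `r s = f' s - f' 0 - s • f'' 0` is the first-order Taylor remainder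
of `f'`. Since `‖r s‖ ≤ M s² / 2`, this gives `‖g' s‖ ≤ M h s`, hence `‖g s‖ ≤ M h s² / 2`.
As `|e^{iωs}| = 1`, the integral is at most `∫₀ʰ M h s² / 2 = M h⁴ / 6`, whatever `ω`.
-/

open Set

theorem ContinuousOn.le_ciSup_of_isCompact {X : Type*} [TopologicalSpace X] {s : Set X}
    {g : X → ℝ} (hs : IsCompact s) (hg : ContinuousOn g s) {t : X} (ht : t ∈ s) :
    g t ≤ ⨆ ξ : s, g ξ :=
  le_ciSup (f := fun ξ : s ↦ g ξ) (by simpa only [image_eq_range] using hs.bddAbove_image hg)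
    ⟨t, ht⟩

section RealVariable

variable {E : Type*} [NormedAddCommGroup E] [NormedSpace ℝ E]

theorem norm_le_of_norm_deriv_le_pow {φ ψ : ℝ → E} {a b C : ℝ} {n : ℕ}
    (hφ : ∀ x ∈ Icc a b, HasDerivAt φ (ψ x) x) (ha : φ a = 0)
    (hψ : ∀ x ∈ Ico a b, ‖ψ x‖ ≤ C * (x - a) ^ n) :
    ∀ x ∈ Icc a b, ‖φ x‖ ≤ C / (n + 1) * (x - a) ^ (n + 1) := by
  have hB (x : ℝ) :
      HasDerivAt (fun x ↦ C / (n + 1) * (x - a) ^ (n + 1)) (C * (x - a) ^ n) x := by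
    refine (((hasDerivAt_pow (n + 1) (x - a)).comp_sub_const x a).const_mul
      (C / (n + 1))).congr_deriv ?_
    push_cast
    field_simp
  exact image_norm_le_of_norm_deriv_right_le_deriv_boundary
    (fun x hx ↦ (hφ x hx).continuousAt.continuousWithinAt)
    (fun x hx ↦ (hφ x (Ico_subset_Icc_self hx)).hasDerivWithinAt) (by simp [ha]) hB hψ

theorem norm_taylor_remainder_one_le {g g' g'' : ℝ → E} {a b M : ℝ}
    (hg : ∀ x ∈ Icc a b, HasDerivAt g (g' x) x) (hg' : ∀ x ∈ Icc a b, HasDerivAt g' (g'' x) x)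
    (hM : ∀ x ∈ Icc a b, ‖g'' x‖ ≤ M) :
    ∀ x ∈ Icc a b, ‖g x - g a - (x - a) • g' a‖ ≤ M / 2 * (x - a) ^ 2 := by
  have hg'_sub : ∀ x ∈ Icc a b, ‖g' x - g' a‖ ≤ M * (x - a) :=
    norm_image_sub_le_of_norm_deriv_right_le_segment
      (fun x hx ↦ (hg' x hx).continuousAt.continuousWithinAt)
      (fun x hx ↦ (hg' x (Ico_subset_Icc_self hx)).hasDerivWithinAt)
      (fun x hx ↦ hM x (Ico_subset_Icc_self hx))
  have hderiv : ∀ x ∈ Icc a b,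
      HasDerivAt (fun x ↦ g x - g a - (x - a) • g' a) (g' x - g' a) x := by
    intro x hx
    exact (((hg x hx).sub_const (g a)).sub
      (((hasDerivAt_id x).sub_const a).smul_const (g' a))).congr_deriv (by rw [one_smul])
  intro x hx
  convert norm_le_of_norm_deriv_le_pow (n := 1) hderiv (by simp)
    (fun x hx ↦ by simpa using hg'_sub x (Ico_subset_Icc_self hx)) x hx using 2
  norm_num

/-- The quadratic `p` with `p 0 = f 0`, `p' 0 = f' 0` and `p' h = f' h`. -/
noncomputable def filonInterpolant (h : ℝ) (f f' : ℝ → E) (s : ℝ) : E :=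
  (s ^ 2 / (2 * h)) • (f' h - f' 0) + s • f' 0 + f 0

theorem hasDerivAt_filonInterpolant (h : ℝ) (f f' : ℝ → E) (s : ℝ) :
    HasDerivAt (filonInterpolant h f f') ((s / h) • (f' h - f' 0) + f' 0) s := by
  have hquad : HasDerivAt (fun s : ℝ ↦ s ^ 2 / (2 * h)) (s / h) s := by
    refine ((hasDerivAt_pow 2 s).div_const (2 * h)).congr_deriv ?_
    push_cast
    field_simp
  exact ((hquad.smul_const (f' h - f' 0)).add
    ((hasDerivAt_id s).smul_const (f' 0))).add_const (f 0) |>.congr_deriv (by rw [one_smul])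

theorem norm_sub_div_smul_le_of_norm_le_sq {r : ℝ → E} {h M x : ℝ} (hh : 0 < h)
    (hr : ∀ y ∈ Icc 0 h, ‖r y‖ ≤ M / 2 * y ^ 2) (hx : x ∈ Icc 0 h) :
    ‖r x - (x / h) • r h‖ ≤ M * h * x := by
  have hM : 0 ≤ M := by
    have := (norm_nonneg (r h)).trans (hr h ⟨hh.le, le_rfl⟩)
    nlinarith [pow_pos hh 2]
  have hxh : 0 ≤ x / h := div_nonneg hx.1 hh.le
  calc ‖r x - (x / h) • r h‖ ≤ ‖r x‖ + (x / h) * ‖r h‖ := by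
        simpa only [norm_smul, Real.norm_of_nonneg hxh] using norm_sub_le (r x) ((x / h) • r h)
    _ ≤ M / 2 * x ^ 2 + (x / h) * (M / 2 * h ^ 2) :=
        add_le_add (hr x hx) (mul_le_mul_of_nonneg_left (hr h ⟨hh.le, le_rfl⟩) hxh)
    _ = M / 2 * x * (x + h) := by field_simp
    _ ≤ M * h * x := by nlinarith [mul_nonneg hM hx.1, hx.2]

theorem norm_sub_filonInterpolant_le {h M : ℝ} (hh : 0 < h) {f f' f'' f''' : ℝ → E}
    (hd1 : ∀ s ∈ Icc 0 h, HasDerivAt f (f' s) s)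
    (hd2 : ∀ s ∈ Icc 0 h, HasDerivAt f' (f'' s) s)
    (hd3 : ∀ s ∈ Icc 0 h, HasDerivAt f'' (f''' s) s)
    (hM : ∀ s ∈ Icc 0 h, ‖f''' s‖ ≤ M) :
    ∀ x ∈ Icc 0 h, ‖f x - filonInterpolant h f f' x‖ ≤ M * h / 2 * x ^ 2 := by
  set r : ℝ → E := fun x ↦ f' x - f' 0 - x • f'' 0
  have hr : ∀ x ∈ Icc 0 h, ‖r x‖ ≤ M / 2 * x ^ 2 := by
    simpa using norm_taylor_remainder_one_le hd2 hd3 hM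
  have hderiv : ∀ x ∈ Icc 0 h,
      HasDerivAt (fun x ↦ f x - filonInterpolant h f f' x) (r x - (x / h) • r h) x := by
    intro x hx
    refine ((hd1 x hx).sub (hasDerivAt_filonInterpolant h f f' x)).congr_deriv ?_
    simp only [r, smul_sub, smul_smul, div_mul_cancel₀ x hh.ne']
    abel
  intro x hx
  convert norm_le_of_norm_deriv_le_pow (n := 1) hderiv (by simp [filonInterpolant])
    (fun y hy ↦ by simpa using norm_sub_div_smul_le_of_norm_le_sq hh hr (Ico_subset_Icc_self hy))
    x hx using 1
  norm_num

end RealVariable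

theorem norm_integral_exp_smul_le_of_norm_le_sq {E : Type*} [NormedAddCommGroup E]
    [NormedSpace ℂ E] {g : ℝ → E} {h C : ℝ} (hh : 0 ≤ h) (hg : ∀ s ∈ Icc 0 h, ‖g s‖ ≤ C * s ^ 2)
    (ω : ℝ) :
    ‖∫ s in (0 : ℝ)..h, Complex.exp (Complex.I * ω * s) • g s‖ ≤ C * h ^ 3 / 3 := by
  have hnorm (s : ℝ) : ‖Complex.exp (Complex.I * ω * s)‖ = 1 := by
    rw [show Complex.I * ω * s = ((ω * s : ℝ) : ℂ) * Complex.I by push_cast; ring]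
    exact Complex.norm_exp_ofReal_mul_I _
  calc ‖∫ s in (0 : ℝ)..h, Complex.exp (Complex.I * ω * s) • g s‖
      ≤ ∫ s in (0 : ℝ)..h, C * s ^ 2 := by
        refine intervalIntegral.norm_integral_le_of_norm_le hh
          (Filter.Eventually.of_forall fun s hs ↦ ?_)
          (by apply Continuous.intervalIntegrable; fun_prop)
        rw [norm_smul, hnorm, one_mul]
        exact hg s (Ioc_subset_Icc_self hs)
    _ = C * h ^ 3 / 3 := by
        rw [intervalIntegral.integral_const_mul, integral_pow]
        ring

theorem filon_quadrature_error_uniform_in_frequency_general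
    {E : Type*} [NormedAddCommGroup E] [NormedSpace ℂ E]
    (h : ℝ) (hh : 0 < h) (f f' f'' f''' : ℝ → E)
    (hd1 : ∀ s ∈ Set.Icc (0 : ℝ) h, HasDerivAt f (f' s) s)
    (hd2 : ∀ s ∈ Set.Icc (0 : ℝ) h, HasDerivAt f' (f'' s) s)
    (hd3 : ∀ s ∈ Set.Icc (0 : ℝ) h, HasDerivAt f'' (f''' s) s)
    (hcont : ContinuousOn f''' (Set.Icc (0 : ℝ) h)) :
    ∀ ω : ℝ,
      ‖∫ s in (0:ℝ)..h,
          Complex.exp (Complex.I * (ω : ℂ) * (s : ℂ)) •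
            (f s - ((s ^ 2 / (2 * h)) • (f' h - f' 0) + s • f' 0 + f 0))‖ ≤
        (h ^ 4 / 4) * ⨆ ξ : Set.Icc (0 : ℝ) h, ‖f''' ξ‖ := by
  intro ω
  set M := ⨆ ξ : Set.Icc (0 : ℝ) h, ‖f''' ξ‖
  have hM : ∀ s ∈ Icc 0 h, ‖f''' s‖ ≤ M := fun s hs ↦
    hcont.norm.le_ciSup_of_isCompact isCompact_Icc hs
  have hM0 : 0 ≤ M := (norm_nonneg _).trans (hM 0 ⟨le_rfl, hh.le⟩)
  calc _ ≤ M * h / 2 * h ^ 3 / 3 := norm_integral_exp_smul_le_of_norm_le_sq hh.le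
        (norm_sub_filonInterpolant_le hh hd1 hd2 hd3 hM) ω
    _ ≤ h ^ 4 / 4 * M := by nlinarith [pow_pos hh 4]

/-- **equation (2.10), Filon quadrature error is uniform in the frequency.**
If `f` is three times continuously differentiable on `[0,h]` and
`p(s) := ((f'(h) − f'(0))/(2h))·s² + f'(0)·s + f(0)`, then for every `ω ∈ ℝ`,
`‖∫₀ʰ (f(s) − p(s))·e^{iωs} ds‖ ≤ (h⁴/4)·sup_{[0,h]}‖f'''‖`; the bound is independent
of `ω`. -/
theorem filon_quadrature_error_uniform_in_frequency
    {E : Type*} [NormedAddCommGroup E] [NormedSpace ℂ E] [CompleteSpace E]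
    (h : ℝ) (hh : 0 < h) (f f' f'' f''' : ℝ → E)
    (hd1 : ∀ s ∈ Set.Icc (0 : ℝ) h, HasDerivAt f (f' s) s)
    (hd2 : ∀ s ∈ Set.Icc (0 : ℝ) h, HasDerivAt f' (f'' s) s)
    (hd3 : ∀ s ∈ Set.Icc (0 : ℝ) h, HasDerivAt f'' (f''' s) s)
    (hcont : ContinuousOn f''' (Set.Icc (0 : ℝ) h)) :
    ∀ ω : ℝ,
      ‖∫ s in (0:ℝ)..h,
          Complex.exp (Complex.I * (ω : ℂ) * (s : ℂ)) •
            (f s - ((s ^ 2 / (2 * h)) • (f' h - f' 0) + s • f' 0 + f 0))‖ ≤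
        (h ^ 4 / 4) * ⨆ ξ : Set.Icc (0 : ℝ) h, ‖f''' ξ‖ :=
  filon_quadrature_error_uniform_in_frequency_general h hh f f' f'' f''' hd1 hd2 hd3 hcont
end

section
/- Structural bound on the remainders ℛ_k and ℛ'_k (Lemma 3.3, operator part): let h > 0, M ≥ 0, B ≥ 0 and an integer k ≥ 2. Let m₀, …, m_{k−1} : ℝ → (H →L[ℂ] H) be continuous with ‖m_l(τ)‖ ≤ M for all τ ∈ [0,h], and let e₀, …, e_{k−1} : ℝ → H be continuous with ‖e_l(τ)‖ ≤ B for all τ ∈ [0,h]. With CosG(t) := cfc (fun x => Real.cos (t*x)) G, SinG(t) := cfc (fun x => Real.sin (t*x)) G, and SG(t) := cfc (fun x => Real.sin (t*x) / x) G (so SG(t) = G⁻¹ sin(tG)), one has ‖ Σ_{l=0}^{k−2} 2·SG(h/2) (∫₀ʰ CosG((k−l)h − h/2 − τ) (m_l(τ) (e_l(τ))) dτ) + ∫₀ʰ SG(h−τ) (m_{k−1}(τ) (e_{k−1}(τ))) dτ ‖ ≤ k · h² · M · B, and ‖ −Σ_{l=0}^{k−2} 2·SinG(h/2) (∫₀ʰ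 SinG((k−l)h − h/2 − τ) (m_l(τ) (e_l(τ))) dτ) + ∫₀ʰ CosG(h−τ) (m_{k−1}(τ) (e_{k−1}(τ))) dτ ‖ ≤ (k−1) · h² · ‖G‖ · M · B + h · M · B. -/
/-- **Lemma 3.3, operator part.** Structural bound on the remainders
`ℛ_k` and `ℛ'_k`: with `SG(t) = G⁻¹ sin(tG)`, `SinG(t) = sin(tG)`, `CosG(t) = cos(tG)`
defined through the continuous functional calculus of the positive operator `G`, and with
`‖m_l(τ)‖ ≤ M`, `‖e_l(τ)‖ ≤ B` on `[0,h]`, the two remainder expressions are bounded by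
`k·h²·M·B` and `(k−1)·h²·‖G‖·M·B + h·M·B` respectively. -/
theorem remainder_structural_bound
    {H : Type*} [NormedAddCommGroup H] [InnerProductSpace ℂ H] [CompleteSpace H]
    [Nontrivial H]
    (G : H →L[ℂ] H) (hsa : IsSelfAdjoint G)
    (hspec : spectrum ℝ G ⊆ Set.Ioi (0 : ℝ))
    (h : ℝ) (hh : 0 < h) (M B : ℝ) (hM : 0 ≤ M) (hB : 0 ≤ B)
    (k : ℕ) (hk : 2 ≤ k)
    (m : ℕ → ℝ → (H →L[ℂ] H)) (e : ℕ → ℝ → H)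
    (hmc : ∀ l < k, Continuous (m l)) (hec : ∀ l < k, Continuous (e l))
    (hmb : ∀ l < k, ∀ τ ∈ Set.Icc (0 : ℝ) h, ‖m l τ‖ ≤ M)
    (heb : ∀ l < k, ∀ τ ∈ Set.Icc (0 : ℝ) h, ‖e l τ‖ ≤ B) :
    ‖(∑ l ∈ Finset.range (k - 1),
        (2 : ℝ) • (cfc (fun x : ℝ => Real.sin ((h / 2) * x) / x) G)
          (∫ τ in (0:ℝ)..h,
            (cfc (fun x : ℝ => Real.cos (((((k : ℝ) - l) * h - h / 2 - τ)) * x)) G)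
              (m l τ (e l τ)))) +
      ∫ τ in (0:ℝ)..h,
        (cfc (fun x : ℝ => Real.sin ((h - τ) * x) / x) G)
          (m (k - 1) τ (e (k - 1) τ))‖ ≤ (k : ℝ) * h ^ 2 * M * B ∧
    ‖-(∑ l ∈ Finset.range (k - 1),
        (2 : ℝ) • (cfc (fun x : ℝ => Real.sin ((h / 2) * x)) G)
          (∫ τ in (0:ℝ)..h,
            (cfc (fun x : ℝ => Real.sin (((((k : ℝ) - l) * h - h / 2 - τ)) * x)) G)
              (m l τ (e l τ)))) +
      ∫ τ in (0:ℝ)..h,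
        (cfc (fun x : ℝ => Real.cos ((h - τ) * x)) G)
          (m (k - 1) τ (e (k - 1) τ))‖ ≤
      ((k : ℝ) - 1) * h ^ 2 * ‖G‖ * M * B + h * M * B := by
  -- basic cfc norm bounds
  have hcos : ∀ t : ℝ, ‖cfc (fun x : ℝ => Real.cos (t * x)) G‖ ≤ 1 := by
    intro t
    refine norm_cfc_le zero_le_one fun x hx => ?_
    simpa using Real.abs_cos_le_one (t * x)
  have hsg : ∀ t : ℝ, 0 ≤ t → ‖cfc (fun x : ℝ => Real.sin (t * x) / x) G‖ ≤ t := by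
    intro t ht
    refine norm_cfc_le ht fun x hx => ?_
    have hx0 : 0 < x := hspec hx
    rw [Real.norm_eq_abs, abs_div, abs_of_pos hx0, div_le_iff₀ hx0]
    calc |Real.sin (t * x)| ≤ |t * x| := Real.abs_sin_le_abs
      _ = t * x := by rw [abs_of_nonneg (by positivity)]
  have hsin : ∀ t : ℝ, 0 ≤ t → ‖cfc (fun x : ℝ => Real.sin (t * x)) G‖ ≤ t * ‖G‖ := by
    intro t ht
    refine norm_cfc_le (by positivity) fun x hx => ?_
    have hx0 : 0 < x := hspec hx
    have hxG : x ≤ ‖G‖ := by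
      simpa [abs_of_pos hx0] using spectrum.norm_le_norm_of_mem hx
    calc ‖Real.sin (t * x)‖ ≤ |t * x| := Real.abs_sin_le_abs
      _ = t * x := by rw [abs_of_nonneg (by positivity)]
      _ ≤ t * ‖G‖ := by nlinarith
  -- pointwise bound on the vectors
  have hMB : ∀ l < k, ∀ τ ∈ Set.uIoc (0 : ℝ) h, ‖m l τ (e l τ)‖ ≤ M * B := by
    intro l hl τ hτ
    rw [Set.uIoc_of_le hh.le] at hτ
    have hτ' : τ ∈ Set.Icc (0 : ℝ) h := Set.Ioc_subset_Icc_self hτ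
    calc ‖m l τ (e l τ)‖ ≤ ‖m l τ‖ * ‖e l τ‖ := (m l τ).le_opNorm _
      _ ≤ M * B := mul_le_mul (hmb l hl τ hτ') (heb l hl τ hτ') (norm_nonneg _) hM
  -- bound on the integrals
  have hint : ∀ l < k, ∀ (f : ℝ → ℝ → ℝ) (c : ℝ),
      (∀ τ ∈ Set.uIoc (0 : ℝ) h, ‖cfc (f τ) G‖ ≤ c) →
      ‖∫ τ in (0:ℝ)..h, (cfc (f τ) G) (m l τ (e l τ))‖ ≤ c * (M * B) * h := by
    intro l hl f c hf
    have := intervalIntegral.norm_integral_le_of_norm_le_const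
      (C := c * (M * B)) (f := fun τ => (cfc (f τ) G) (m l τ (e l τ)))
      (a := 0) (b := h) ?_
    · calc ‖∫ τ in (0:ℝ)..h, (cfc (f τ) G) (m l τ (e l τ))‖
          ≤ c * (M * B) * |h - 0| := this
        _ = c * (M * B) * h := by rw [sub_zero, abs_of_pos hh]
    · intro τ hτ
      calc ‖(cfc (f τ) G) (m l τ (e l τ))‖ ≤ ‖cfc (f τ) G‖ * ‖m l τ (e l τ)‖ :=
            (cfc (f τ) G).le_opNorm _
        _ ≤ c * (M * B) := mul_le_mul (hf τ hτ) (hMB l hl τ hτ) (norm_nonneg _)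
            ((norm_nonneg _).trans (hf τ hτ))
  have hk1 : 1 ≤ k := le_trans one_le_two hk
  have hkm1 : k - 1 < k := Nat.sub_lt (lt_of_lt_of_le two_pos hk) one_pos
  have hcast : ((k - 1 : ℕ) : ℝ) = (k : ℝ) - 1 := by
    push_cast [hk1]; ring
  constructor
  · -- first bound
    refine (norm_add_le _ _).trans ?_
    have hlast : ‖∫ τ in (0:ℝ)..h,
        (cfc (fun x : ℝ => Real.sin ((h - τ) * x) / x) G) (m (k - 1) τ (e (k - 1) τ))‖
        ≤ h * (M * B) * h := by
      refine hint (k - 1) hkm1 _ _ fun τ hτ => ?_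
      rw [Set.uIoc_of_le hh.le] at hτ
      exact (hsg (h - τ) (by linarith [hτ.2])).trans (by linarith [hτ.1])
    have hterm : ∀ l ∈ Finset.range (k - 1),
        ‖(2 : ℝ) • (cfc (fun x : ℝ => Real.sin ((h / 2) * x) / x) G)
          (∫ τ in (0:ℝ)..h,
            (cfc (fun x : ℝ => Real.cos (((((k : ℝ) - l) * h - h / 2 - τ)) * x)) G)
              (m l τ (e l τ)))‖ ≤ h ^ 2 * M * B := by
      intro l hl
      have hlk : l < k := lt_trans (Finset.mem_range.mp hl) hkm1
      have hI : ‖∫ τ in (0:ℝ)..h,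
          (cfc (fun x : ℝ => Real.cos (((((k : ℝ) - l) * h - h / 2 - τ)) * x)) G)
            (m l τ (e l τ))‖ ≤ 1 * (M * B) * h :=
        hint l hlk _ 1 fun τ _ => hcos _
      have hS : ‖cfc (fun x : ℝ => Real.sin ((h / 2) * x) / x) G‖ ≤ h / 2 :=
        hsg _ (by linarith)
      calc ‖(2 : ℝ) • (cfc (fun x : ℝ => Real.sin ((h / 2) * x) / x) G)
            (∫ τ in (0:ℝ)..h,
              (cfc (fun x : ℝ => Real.cos (((((k : ℝ) - l) * h - h / 2 - τ)) * x)) G)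
                (m l τ (e l τ)))‖
          = 2 * ‖(cfc (fun x : ℝ => Real.sin ((h / 2) * x) / x) G)
            (∫ τ in (0:ℝ)..h,
              (cfc (fun x : ℝ => Real.cos (((((k : ℝ) - l) * h - h / 2 - τ)) * x)) G)
                (m l τ (e l τ)))‖ := by
            rw [norm_smul]; simp
        _ ≤ 2 * (‖cfc (fun x : ℝ => Real.sin ((h / 2) * x) / x) G‖ *
              ‖∫ τ in (0:ℝ)..h,
              (cfc (fun x : ℝ => Real.cos (((((k : ℝ) - l) * h - h / 2 - τ)) * x)) G)
                (m l τ (e l τ))‖) := by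
            gcongr
            exact ContinuousLinearMap.le_opNorm _ _
        _ ≤ 2 * ((h / 2) * (1 * (M * B) * h)) := by
            gcongr
        _ = h ^ 2 * M * B := by ring
    have hsum : ‖∑ l ∈ Finset.range (k - 1),
        (2 : ℝ) • (cfc (fun x : ℝ => Real.sin ((h / 2) * x) / x) G)
          (∫ τ in (0:ℝ)..h,
            (cfc (fun x : ℝ => Real.cos (((((k : ℝ) - l) * h - h / 2 - τ)) * x)) G)
              (m l τ (e l τ)))‖ ≤ ((k : ℝ) - 1) * (h ^ 2 * M * B) := by
      refine (norm_sum_le _ _).trans ?_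
      calc ∑ l ∈ Finset.range (k - 1), ‖(2 : ℝ) •
            (cfc (fun x : ℝ => Real.sin ((h / 2) * x) / x) G)
            (∫ τ in (0:ℝ)..h,
              (cfc (fun x : ℝ => Real.cos (((((k : ℝ) - l) * h - h / 2 - τ)) * x)) G)
                (m l τ (e l τ)))‖
          ≤ ∑ l ∈ Finset.range (k - 1), h ^ 2 * M * B := Finset.sum_le_sum hterm
        _ = ((k : ℝ) - 1) * (h ^ 2 * M * B) := by
            rw [Finset.sum_const, Finset.card_range, nsmul_eq_mul, hcast]
    calc _ ≤ ((k : ℝ) - 1) * (h ^ 2 * M * B) + h * (M * B) * h :=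
          add_le_add hsum hlast
      _ = (k : ℝ) * h ^ 2 * M * B := by ring
  · -- second bound
    refine (norm_add_le _ _).trans ?_
    rw [norm_neg]
    have hlast : ‖∫ τ in (0:ℝ)..h,
        (cfc (fun x : ℝ => Real.cos ((h - τ) * x)) G) (m (k - 1) τ (e (k - 1) τ))‖
        ≤ 1 * (M * B) * h :=
      hint (k - 1) hkm1 _ 1 fun τ _ => hcos _
    have hterm : ∀ l ∈ Finset.range (k - 1),
        ‖(2 : ℝ) • (cfc (fun x : ℝ => Real.sin ((h / 2) * x)) G)
          (∫ τ in (0:ℝ)..h,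
            (cfc (fun x : ℝ => Real.sin (((((k : ℝ) - l) * h - h / 2 - τ)) * x)) G)
              (m l τ (e l τ)))‖ ≤ h ^ 2 * ‖G‖ * M * B := by
      intro l hl
      have hlk : l < k := lt_trans (Finset.mem_range.mp hl) hkm1
      have hI : ‖∫ τ in (0:ℝ)..h,
          (cfc (fun x : ℝ => Real.sin (((((k : ℝ) - l) * h - h / 2 - τ)) * x)) G)
            (m l τ (e l τ))‖ ≤ 1 * (M * B) * h := by
        refine hint l hlk _ 1 fun τ _ => ?_
        refine norm_cfc_le zero_le_one fun x hx => ?_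
        simpa using Real.abs_sin_le_one _
      have hS : ‖cfc (fun x : ℝ => Real.sin ((h / 2) * x)) G‖ ≤ (h / 2) * ‖G‖ :=
        hsin _ (by linarith)
      calc ‖(2 : ℝ) • (cfc (fun x : ℝ => Real.sin ((h / 2) * x)) G)
            (∫ τ in (0:ℝ)..h,
              (cfc (fun x : ℝ => Real.sin (((((k : ℝ) - l) * h - h / 2 - τ)) * x)) G)
                (m l τ (e l τ)))‖
          = 2 * ‖(cfc (fun x : ℝ => Real.sin ((h / 2) * x)) G)
            (∫ τ in (0:ℝ)..h,
              (cfc (fun x : ℝ => Real.sin (((((k : ℝ) - l) * h - h / 2 - τ)) * x)) G)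
                (m l τ (e l τ)))‖ := by
            rw [norm_smul]; simp
        _ ≤ 2 * (‖cfc (fun x : ℝ => Real.sin ((h / 2) * x)) G‖ *
              ‖∫ τ in (0:ℝ)..h,
              (cfc (fun x : ℝ => Real.sin (((((k : ℝ) - l) * h - h / 2 - τ)) * x)) G)
                (m l τ (e l τ))‖) := by
            gcongr
            exact ContinuousLinearMap.le_opNorm _ _
        _ ≤ 2 * (((h / 2) * ‖G‖) * (1 * (M * B) * h)) := by
            gcongr
        _ = h ^ 2 * ‖G‖ * M * B := by ring
    have hsum : ‖∑ l ∈ Finset.range (k - 1),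
        (2 : ℝ) • (cfc (fun x : ℝ => Real.sin ((h / 2) * x)) G)
          (∫ τ in (0:ℝ)..h,
            (cfc (fun x : ℝ => Real.sin (((((k : ℝ) - l) * h - h / 2 - τ)) * x)) G)
              (m l τ (e l τ)))‖ ≤ ((k : ℝ) - 1) * (h ^ 2 * ‖G‖ * M * B) := by
      refine (norm_sum_le _ _).trans ?_
      calc ∑ l ∈ Finset.range (k - 1), ‖(2 : ℝ) •
            (cfc (fun x : ℝ => Real.sin ((h / 2) * x)) G)
            (∫ τ in (0:ℝ)..h,
              (cfc (fun x : ℝ => Real.sin (((((k : ℝ) - l) * h - h / 2 - τ)) * x)) G)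
                (m l τ (e l τ)))‖
          ≤ ∑ l ∈ Finset.range (k - 1), h ^ 2 * ‖G‖ * M * B := Finset.sum_le_sum hterm
        _ = ((k : ℝ) - 1) * (h ^ 2 * ‖G‖ * M * B) := by
            rw [Finset.sum_const, Finset.card_range, nsmul_eq_mul, hcast]
    calc _ ≤ ((k : ℝ) - 1) * (h ^ 2 * ‖G‖ * M * B) + 1 * (M * B) * h :=
          add_le_add hsum hlast
      _ = ((k : ℝ) - 1) * h ^ 2 * ‖G‖ * M * B + h * M * B := by ring
end

section
/- Discrete Gronwall-type estimate yielding convergence (core estimate in the proof of Theorem 3.4): let M ≥ 0, g ≥ 1, 0 < h ≤ 1, integer K ≥ 1, T := K·h, and 0 ≤ R ≤ R'. Let (ρ_k) and (ρ'_k) be defined by ρ₀ = ρ'₀ = 0, ρ₁ = R, ρ'₁ = R', and for k ≥ 2: ρ_k = ρ_{k−1} + M( h ρ_{k−1} + h² ρ'_{k−1} + h² ρ'_{k−2} ) + R, ρ'_k = ρ'_{k−1} + M g ( h ρ_{k−1} + h² ρ'_{k−1} + h² ρ'_{k−2} ) + R'. Then ρ_K ≤ ρ'_K ≤ R' · Σ_{j=0}^{K−1}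 (1 + 3Mgh)^j ≤ R' · K · exp(3MgT). In particular, if for some C ≥ 0 and ω̃ ≥ 0 one has R' ≤ C · g · h³ · min{h·ω̃, 1}, then ρ_K ≤ ρ'_K ≤ C · g · T · exp(3MgT) · min{h³·ω̃, h²}, a bound of order h³ in h (for h·ω̃ ≤ 1) whose constant does not grow with ω̃. -/
/-- **core estimate in the proof of Theorem 3.4.** Discrete Gronwall-type
estimate: `ρ_K ≤ ρ'_K ≤ R'·Σ_{j<K}(1+3Mgh)^j ≤ R'·K·exp(3MgT)`; in particular, if
`R' ≤ C·g·h³·min(h·ω̃, 1)` then `ρ'_K ≤ C·g·T·exp(3MgT)·min(h³·ω̃, h²)`. -/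
theorem discrete_gronwall_convergence
    (M g h R R' : ℝ) (hM : 0 ≤ M) (hg : 1 ≤ g) (hh0 : 0 < h) (hh1 : h ≤ 1)
    (K : ℕ) (hK : 1 ≤ K) (T : ℝ) (hT : T = K * h)
    (hR : 0 ≤ R) (hRR' : R ≤ R')
    (ρ ρ' : ℕ → ℝ)
    (hρ0 : ρ 0 = 0) (hρ'0 : ρ' 0 = 0) (hρ1 : ρ 1 = R) (hρ'1 : ρ' 1 = R')
    (hρ : ∀ k : ℕ, 2 ≤ k →
      ρ k = ρ (k - 1) + M * (h * ρ (k - 1) + h ^ 2 * ρ' (k - 1) + h ^ 2 * ρ' (k - 2)) + R)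
    (hρ' : ∀ k : ℕ, 2 ≤ k →
      ρ' k = ρ' (k - 1) + M * g * (h * ρ (k - 1) + h ^ 2 * ρ' (k - 1) + h ^ 2 * ρ' (k - 2))
        + R') :
    ρ K ≤ ρ' K ∧
    ρ' K ≤ R' * ∑ j ∈ Finset.range K, (1 + 3 * M * g * h) ^ j ∧
    R' * ∑ j ∈ Finset.range K, (1 + 3 * M * g * h) ^ j ≤
      R' * K * Real.exp (3 * M * g * T) ∧
    (∀ C ω' : ℝ, 0 ≤ C → 0 ≤ ω' →
      R' ≤ C * g * h ^ 3 * min (h * ω') 1 →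
      ρ' K ≤ C * g * T * Real.exp (3 * M * g * T) * min (h ^ 3 * ω') (h ^ 2)) := by
  have hR' : (0:ℝ) ≤ R' := le_trans hR hRR'
  have hMg : (0:ℝ) ≤ M * g := mul_nonneg hM (le_trans zero_le_one hg)
  -- main invariant
  have key : ∀ k : ℕ, 1 ≤ k →
      0 ≤ ρ k ∧ ρ k ≤ ρ' k ∧ 0 ≤ ρ' (k - 1) ∧ ρ' (k - 1) ≤ ρ' k ∧
      ρ' k ≤ R' * ∑ j ∈ Finset.range k, (1 + 3 * M * g * h) ^ j := by
    intro k hk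
    induction k, hk using Nat.le_induction with
    | base =>
      simp only [Nat.sub_self, hρ0, hρ'0, hρ1, hρ'1, Finset.range_one,
        Finset.sum_singleton, pow_zero, mul_one]
      exact ⟨hR, hRR', le_refl 0, hR', le_refl R'⟩
    | succ k hk ih =>
      obtain ⟨h1, h2, h3, h4, h5⟩ := ih
      have e1 : k + 1 - 1 = k := rfl
      have e2 : k + 1 - 2 = k - 1 := rfl
      have hrec := hρ (k + 1) (by omega)
      have hrec' := hρ' (k + 1) (by omega)
      rw [e1, e2] at hrec hrec'
      have hρ'k : 0 ≤ ρ' k := le_trans h3 h4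
      have hB : 0 ≤ h * ρ k + h ^ 2 * ρ' k + h ^ 2 * ρ' (k - 1) := by positivity
      have hBle : h * ρ k + h ^ 2 * ρ' k + h ^ 2 * ρ' (k - 1) ≤ 3 * h * ρ' k := by
        nlinarith [mul_le_mul_of_nonneg_left h2 hh0.le,
          mul_le_mul_of_nonneg_left h4 (sq_nonneg h)]
      have hρk1 : 0 ≤ ρ (k + 1) := by
        rw [hrec]; positivity
      have hmono : ρ' k ≤ ρ' (k + 1) := by
        rw [hrec']; nlinarith
      refine ⟨hρk1, ?_, hρ'k, by simpa using hmono, ?_⟩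
      · rw [hrec, hrec']
        have hg1 : 0 ≤ M * (g - 1) := mul_nonneg hM (by linarith)
        nlinarith [mul_nonneg hg1 hB]
      · rw [geom_sum_succ, hrec']
        have hq : (0:ℝ) ≤ 1 + 3 * M * g * h := by positivity
        have h7 := mul_le_mul_of_nonneg_left hBle hMg
        have h8 : (1 + 3 * M * g * h) * ρ' k = ρ' k + M * g * (3 * h * ρ' k) := by ring
        have : ρ' k + M * g * (h * ρ k + h ^ 2 * ρ' k + h ^ 2 * ρ' (k - 1)) + R'
            ≤ (1 + 3 * M * g * h) * ρ' k + R' := by linarith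
        refine le_trans this ?_
        have h6 := mul_le_mul_of_nonneg_left h5 hq
        calc (1 + 3 * M * g * h) * ρ' k + R'
            ≤ (1 + 3 * M * g * h) * (R' * ∑ j ∈ Finset.range k, (1 + 3 * M * g * h) ^ j)
              + R' := by linarith
          _ = R' * ((1 + 3 * M * g * h) * (∑ j ∈ Finset.range k, (1 + 3 * M * g * h) ^ j)
              + 1) := by ring
  obtain ⟨h1, h2, h3, h4, h5⟩ := key K hK
  have hsum : R' * ∑ j ∈ Finset.range K, (1 + 3 * M * g * h) ^ j ≤
      R' * K * Real.exp (3 * M * g * T) := by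
    have hbound : ∀ j ∈ Finset.range K, (1 + 3 * M * g * h) ^ j ≤ Real.exp (3 * M * g * T) := by
      intro j hj
      have hj' : j < K := Finset.mem_range.mp hj
      have hq : (0:ℝ) ≤ 3 * M * g * h := by positivity
      calc (1 + 3 * M * g * h) ^ j ≤ (Real.exp (3 * M * g * h)) ^ j := by
            apply pow_le_pow_left₀ (by linarith)
            linarith [Real.add_one_le_exp (3 * M * g * h)]
        _ = Real.exp (3 * M * g * h * j) := by
            rw [← Real.exp_nat_mul]; ring_nf
        _ ≤ Real.exp (3 * M * g * T) := by
            apply Real.exp_le_exp.mpr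
            rw [hT]
            have : (j:ℝ) ≤ K := by exact_mod_cast hj'.le
            nlinarith
    calc R' * ∑ j ∈ Finset.range K, (1 + 3 * M * g * h) ^ j
        ≤ R' * ∑ j ∈ Finset.range K, Real.exp (3 * M * g * T) := by
          apply mul_le_mul_of_nonneg_left (Finset.sum_le_sum hbound) hR'
      _ = R' * K * Real.exp (3 * M * g * T) := by
          rw [Finset.sum_const, Finset.card_range]; ring
  refine ⟨h2, h5, hsum, ?_⟩
  intro C ω' hC hω' hR'le
  have hK0 : (0:ℝ) ≤ K := Nat.cast_nonneg K
  have hexp : (0:ℝ) ≤ Real.exp (3 * M * g * T) := (Real.exp_pos _).le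
  have hmin : h ^ 2 * min (h * ω') 1 = min (h ^ 3 * ω') (h ^ 2) := by
    rw [mul_min_of_nonneg _ _ (by positivity : (0:ℝ) ≤ h ^ 2)]
    ring_nf
  calc ρ' K ≤ R' * K * Real.exp (3 * M * g * T) := le_trans h5 hsum
    _ ≤ (C * g * h ^ 3 * min (h * ω') 1) * K * Real.exp (3 * M * g * T) := by
        apply mul_le_mul_of_nonneg_right _ hexp
        exact mul_le_mul_of_nonneg_right hR'le hK0
    _ = C * g * (K * h) * Real.exp (3 * M * g * T) * (h ^ 2 * min (h * ω') 1) := by ring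
    _ = C * g * T * Real.exp (3 * M * g * T) * min (h ^ 3 * ω') (h ^ 2) := by
        rw [hmin, hT]
end
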